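/- Let G be a game in G_single with Σ_j p_j ≤ T. For every tie-breaking rule M, every Nash equilibrium σ with respect to M, and every two distinct jobs a and b that are not covered under M(σ), it holds that w_a + w_b ≤ val(σ). -/

import Mathlib

open Classical

/-- An interval scheduling game: jobs `Fin n`, colors `Fin c`, horizon `[0, T)`,
and for each job a color, a length and a weight. -/
structure Game where
  n : ℕ
  c : ℕ
  T : ℝ
  T_pos : 0 < T
  color : Fin n → Fin c
  len : Fin n → ℝ
  wt : Fin n → ℝ
  len_nonneg : ∀ j, 0 ≤ len j
  len_le_T : ∀ j, len j ≤ T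
  wt_nonneg : ∀ j, 0 ≤ wt j

/-- A strategy profile assigns a feasible start time to every job, so that job `j`
occupies `[start j, start j + len j) ⊆ [0, T)`. -/
structure Game.Profile (G : Game) where
  start : Fin G.n → ℝ
  start_nonneg : ∀ j, 0 ≤ start j
  start_le : ∀ j, start j + G.len j ≤ G.T

/-- A machine configuration assigns a color to every time point. -/
abbrev Game.Config (G : Game) : Type := ℝ → Fin G.c

/-- Job `j` is covered if the machine is configured to its color throughout its
processing interval `[start j, start j + len j)`. -/
def Game.Covered (G : Game) (s : G.Profile) (γ : G.Config) (j : Fin G.n) : Prop :=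
  ∀ t : ℝ, s.start j ≤ t → t < s.start j + G.len j → γ t = G.color j

/-- The profit of a configuration: total weight of covered jobs. -/
noncomputable def Game.profit (G : Game) (s : G.Profile) (γ : G.Config) : ℝ :=
  ∑ j : Fin G.n, if G.Covered s γ j then G.wt j else 0

/-- The value of a profile: the maximal profit over machine configurations. -/
noncomputable def Game.val (G : Game) (s : G.Profile) : ℝ :=
  sSup {x : ℝ | ∃ γ : G.Config, x = G.profit s γ}

/-- The social optimum value: the maximal value over strategy profiles. -/
noncomputable def Game.valOPT (G : Game) : ℝ :=
  sSup {x : ℝ | ∃ s : G.Profile, x = G.val s}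

/-- A tie-breaking rule selects, for every profile, a configuration of maximal profit. -/
structure Game.TieBreak (G : Game) where
  choice : G.Profile → G.Config
  choice_opt : ∀ s : G.Profile, G.profit s (choice s) = G.val s

/-- Utility of player `i` under tie-breaking rule `M`: total weight of covered jobs
of color `i`. -/
noncomputable def Game.utility (G : Game) (M : G.TieBreak) (i : Fin G.c) (s : G.Profile) : ℝ :=
  ∑ j : Fin G.n, if G.color j = i ∧ G.Covered s (M.choice s) j then G.wt j else 0

/-- Nash equilibrium with respect to tie-breaking rule `M`: no player can strictly
increase its utility by relocating only the jobs of its own color. -/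
def Game.IsNE (G : Game) (M : G.TieBreak) (s : G.Profile) : Prop :=
  ∀ (i : Fin G.c) (s' : G.Profile),
    (∀ j, G.color j ≠ i → s'.start j = s.start j) →
      G.utility M i s' ≤ G.utility M i s

/-- The class `G_single`: exactly one job of each color (`n = c`). -/
def Game.Single (G : Game) : Prop := Function.Bijective G.color

/-!
Move an uncovered job `a` to any feasible window `I = [x, x + p_a)`. In `G_single` the player
owning `a` owns nothing else, so at a Nash equilibrium `a` stays uncovered after the move (its
utility would otherwise rise from `0` to `w_a`); the value of the new profile is then at most
`val(σ)`. On the other hand, repainting `I` with the color of `a` in `M(σ)` covers `a` and keeps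
every covered job that avoids `I`. Hence `w_a` is at most the weight of the jobs covered in
`M(σ)` that meet `I`. Taking the window `[0, p_a)` for `a` and `[T - p_b, T)` for `b`, no
covered job can meet both because `p_a + p_b + p_j ≤ T`, so `w_a + w_b ≤ val(σ)`.
-/

namespace Game

variable {G : Game}

def Profile.interval (s : G.Profile) (j : Fin G.n) : Set ℝ :=
  Set.Ico (s.start j) (s.start j + G.len j)

theorem covered_iff {s : G.Profile} {γ : G.Config} {j : Fin G.n} :
    G.Covered s γ j ↔ ∀ t ∈ s.interval j, γ t = G.color j := by
  simp only [Covered, Profile.interval, Set.mem_Ico, and_imp]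

noncomputable def coveredJobs (G : Game) (s : G.Profile) (γ : G.Config) : Finset (Fin G.n) :=
  Finset.univ.filter (G.Covered s γ)

@[simp]
theorem mem_coveredJobs {s : G.Profile} {γ : G.Config} {j : Fin G.n} :
    j ∈ G.coveredJobs s γ ↔ G.Covered s γ j := by
  simp [coveredJobs]

theorem profit_eq_sum_coveredJobs (s : G.Profile) (γ : G.Config) :
    G.profit s γ = ∑ j ∈ G.coveredJobs s γ, G.wt j := by
  rw [coveredJobs, Finset.sum_filter]
  rfl

theorem profit_le_val (s : G.Profile) (γ : G.Config) : G.profit s γ ≤ G.val s := by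
  refine le_csSup ⟨∑ j, G.wt j, ?_⟩ ⟨γ, rfl⟩
  rintro _ ⟨γ', rfl⟩
  rw [profit_eq_sum_coveredJobs]
  exact Finset.sum_le_sum_of_subset_of_nonneg (Finset.subset_univ _)
    fun j _ _ => G.wt_nonneg j

theorem TieBreak.val_eq_sum_coveredJobs (M : G.TieBreak) (s : G.Profile) :
    G.val s = ∑ j ∈ G.coveredJobs s (M.choice s), G.wt j := by
  rw [← M.choice_opt s, profit_eq_sum_coveredJobs]

theorem utility_color_of_injective (hinj : Function.Injective G.color) (M : G.TieBreak)
    (s : G.Profile) (a : Fin G.n) :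
    G.utility M (G.color a) s = if G.Covered s (M.choice s) a then G.wt a else 0 := by
  unfold utility
  rw [Finset.sum_eq_single a]
  · simp only [true_and]
  · intro j _ hja
    rw [if_neg fun h => hja (hinj h.1)]
  · exact fun h => absurd (Finset.mem_univ a) h

def Profile.moveJob (s : G.Profile) (a : Fin G.n) (x : ℝ) (hx0 : 0 ≤ x)
    (hxT : x + G.len a ≤ G.T) : G.Profile where
  start := Function.update s.start a x
  start_nonneg j := by
    rcases eq_or_ne j a with rfl | hja
    · simpa using hx0
    · simpa [hja] using s.start_nonneg j
  start_le j := by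
    rcases eq_or_ne j a with rfl | hja
    · simpa using hxT
    · simpa [hja] using s.start_le j

section MoveJob

variable {s : G.Profile} {a : Fin G.n} {x : ℝ} (hx0 : 0 ≤ x) (hxT : x + G.len a ≤ G.T)

theorem Profile.moveJob_start_of_ne {j : Fin G.n} (hja : j ≠ a) :
    (s.moveJob a x hx0 hxT).start j = s.start j :=
  Function.update_of_ne hja _ _

theorem Profile.moveJob_interval_self :
    (s.moveJob a x hx0 hxT).interval a = Set.Ico x (x + G.len a) := by
  simp [Profile.interval, Profile.moveJob]

theorem covered_moveJob_iff_of_ne {γ : G.Config} {j : Fin G.n} (hja : j ≠ a) :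
    G.Covered (s.moveJob a x hx0 hxT) γ j ↔ G.Covered s γ j := by
  simp only [Covered, Profile.moveJob_start_of_ne hx0 hxT hja]

theorem profit_moveJob_le {γ : G.Config} (ha : ¬ G.Covered (s.moveJob a x hx0 hxT) γ a) :
    G.profit (s.moveJob a x hx0 hxT) γ ≤ G.profit s γ := by
  simp only [profit_eq_sum_coveredJobs]
  refine Finset.sum_le_sum_of_subset_of_nonneg ?_ fun j _ _ => G.wt_nonneg j
  intro j hj
  rw [mem_coveredJobs] at hj ⊢
  exact (covered_moveJob_iff_of_ne hx0 hxT (by rintro rfl; exact ha hj)).1 hj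

theorem IsNE.not_covered_moveJob (hinj : Function.Injective G.color) {M : G.TieBreak}
    (hNE : G.IsNE M s) (ha : ¬ G.Covered s (M.choice s) a) (hwa : 0 < G.wt a) :
    ¬ G.Covered (s.moveJob a x hx0 hxT) (M.choice (s.moveJob a x hx0 hxT)) a := by
  intro hcov
  have hdev := hNE (G.color a) (s.moveJob a x hx0 hxT)
    fun j hj => Profile.moveJob_start_of_ne hx0 hxT (ne_of_apply_ne G.color hj)
  rw [utility_color_of_injective hinj, utility_color_of_injective hinj, if_pos hcov,
    if_neg ha] at hdev
  linarith

theorem wt_add_sum_disjoint_le_profit_moveJob {γ : G.Config} (ha : ¬ G.Covered s γ a) :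
    G.wt a + ∑ j ∈ (G.coveredJobs s γ).filter
        (fun j => Disjoint (s.interval j) (Set.Ico x (x + G.len a))), G.wt j ≤
      G.profit (s.moveJob a x hx0 hxT)
        ((Set.Ico x (x + G.len a)).piecewise (fun _ => G.color a) γ) := by
  have haJ : a ∉ (G.coveredJobs s γ).filter
      (fun j => Disjoint (s.interval j) (Set.Ico x (x + G.len a))) := by
    simpa using fun h _ => ha h
  rw [← Finset.sum_insert haJ, profit_eq_sum_coveredJobs]
  refine Finset.sum_le_sum_of_subset_of_nonneg ?_ fun j _ _ => G.wt_nonneg j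
  intro j hj
  simp only [Finset.mem_insert, Finset.mem_filter, mem_coveredJobs] at hj ⊢
  rcases hj with rfl | ⟨hcov, hdisj⟩
  · rw [covered_iff, Profile.moveJob_interval_self]
    exact fun t ht => Set.piecewise_eq_of_mem _ _ _ ht
  · have hja : j ≠ a := by rintro rfl; exact ha hcov
    rw [covered_moveJob_iff_of_ne hx0 hxT hja, covered_iff]
    intro t ht
    rw [Set.piecewise_eq_of_notMem _ _ _ (Set.disjoint_left.1 hdisj ht)]
    exact covered_iff.1 hcov t ht

include hx0 hxT in
theorem IsNE.wt_le_sum_meeting (hinj : Function.Injective G.color) {M : G.TieBreak}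
    (hNE : G.IsNE M s) (ha : ¬ G.Covered s (M.choice s) a) :
    G.wt a ≤ ∑ j ∈ (G.coveredJobs s (M.choice s)).filter
      (fun j => ¬ Disjoint (s.interval j) (Set.Ico x (x + G.len a))), G.wt j := by
  rcases (G.wt_nonneg a).eq_or_lt with hwa | hwa
  · rw [← hwa]
    exact Finset.sum_nonneg fun j _ => G.wt_nonneg j
  set s' := s.moveJob a x hx0 hxT
  have hval : G.val s' ≤ G.val s := by
    rw [← M.choice_opt s']
    exact (profit_moveJob_le hx0 hxT (hNE.not_covered_moveJob hx0 hxT hinj ha hwa)).trans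
      (profit_le_val s _)
  have hrepaint := wt_add_sum_disjoint_le_profit_moveJob hx0 hxT ha
  have hsplit := Finset.sum_filter_add_sum_filter_not (G.coveredJobs s (M.choice s))
    (fun j => Disjoint (s.interval j) (Set.Ico x (x + G.len a))) G.wt
  rw [← M.val_eq_sum_coveredJobs] at hsplit
  linarith [profit_le_val s' ((Set.Ico x (x + G.len a)).piecewise (fun _ => G.color a)
    (M.choice s))]

end MoveJob

theorem len_add_len_add_len_le (hp : ∑ j, G.len j ≤ G.T) {a b j : Fin G.n} (hab : a ≠ b)
    (hja : j ≠ a) (hjb : j ≠ b) : G.len a + G.len b + G.len j ≤ G.T := by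
  have hsub : ∑ k ∈ {a, b, j}, G.len k ≤ ∑ k, G.len k :=
    Finset.sum_le_sum_of_subset_of_nonneg (Finset.subset_univ _) fun k _ _ => G.len_nonneg k
  rw [Finset.sum_insert (by simp [hab, hja.symm]), Finset.sum_pair hjb.symm] at hsub
  linarith

theorem disjoint_filter_meets_ends (hp : ∑ j, G.len j ≤ G.T) (s : G.Profile) {a b : Fin G.n}
    (hab : a ≠ b) {J : Finset (Fin G.n)} (haJ : a ∉ J) (hbJ : b ∉ J) :
    Disjoint (J.filter fun j => ¬ Disjoint (s.interval j) (Set.Ico 0 (G.len a)))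
      (J.filter fun j => ¬ Disjoint (s.interval j) (Set.Ico (G.T - G.len b) G.T)) := by
  rw [Finset.disjoint_filter]
  intro j hj hmeet_a hmeet_b
  obtain ⟨t, ⟨hjt, -⟩, -, hta⟩ := Set.not_disjoint_iff.1 hmeet_a
  obtain ⟨u, ⟨-, hju⟩, hub, -⟩ := Set.not_disjoint_iff.1 hmeet_b
  have := len_add_len_add_len_le hp hab (ne_of_mem_of_not_mem hj haJ)
    (ne_of_mem_of_not_mem hj hbJ)
  linarith

end Game

/-- In a game in `G_single` in which all jobs fit together in `[0, T)`, any two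
distinct non-covered jobs of a Nash equilibrium have total weight at most the
equilibrium value. -/
theorem single_NE_uncovered_pair_bound (G : Game) (hsingle : G.Single)
    (hp : (∑ j, G.len j) ≤ G.T)
    (M : G.TieBreak) (s : G.Profile) (hNE : G.IsNE M s)
    (a b : Fin G.n) (hab : a ≠ b)
    (ha : ¬ G.Covered s (M.choice s) a) (hb : ¬ G.Covered s (M.choice s) b) :
    G.wt a + G.wt b ≤ G.val s := by
  have hA := hNE.wt_le_sum_meeting le_rfl (by linarith [G.len_le_T a]) hsingle.injective ha
  have hB := hNE.wt_le_sum_meeting (x := G.T - G.len b) (by linarith [G.len_le_T b])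
    (by linarith) hsingle.injective hb
  simp only [zero_add, sub_add_cancel] at hA hB
  calc G.wt a + G.wt b ≤ _ := add_le_add hA hB
    _ = _ := (Finset.sum_union (Game.disjoint_filter_meets_ends hp s hab
        (mt Game.mem_coveredJobs.1 ha) (mt Game.mem_coveredJobs.1 hb))).symm
    _ ≤ ∑ j ∈ G.coveredJobs s (M.choice s), G.wt j :=
        Finset.sum_le_sum_of_subset_of_nonneg
          (Finset.union_subset (Finset.filter_subset _ _) (Finset.filter_subset _ _))
          fun j _ _ => G.wt_nonneg j
    _ = G.val s := (M.val_eq_sum_coveredJobs s).symm
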